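/- arXiv:2404.16211 — 2 statements merged into one kernel-verified Lean document; each statement's English description precedes it below -/
import Mathlib

section
/- Let N ≥ 1 and let σ_N be the uniform probability measure on the unit sphere S^{N−1} ⊂ ℝ^N. Let O be an N×N real symmetric positive semidefinite matrix, and for t ≥ 1 let μ_t(O) = ∫_{S^{N−1}} (ψᵀ O ψ)^t dσ_N(ψ). Then μ_t(O) ≥ (Tr(O)/N)^t · ∏_{j=0}^{t−1} N/(N + 2j). (Since ∏_{j=0}^{t−1} N/(N+2j) = 1 − O(t²/N), this is an exact, nonasymptotic form of the lower bound μ_t(O) ≥ (Tr(O)/N)^t (1 − O(t/N)) of Corollary 4.) -/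
/-!
Since `ψᵀOψ ≥ 0` and `x ↦ x ^ t` is convex on `[0, ∞)`, Jensen's inequality gives
`μ_t(O) ≥ (∫ ψᵀOψ dσ) ^ t`, and the product `∏ N / (N + 2j)` is at most `1`. The mean of the
quadratic form is `Tr(O) / N` by rotation invariance: reflecting one coordinate shows that the
off-diagonal second moments `∫ ψᵢψⱼ` vanish, and swapping two coordinates shows that the diagonal
ones are all equal, hence equal to `1 / N` because `∑ ψᵢ² = 1` on the sphere.
-/

open MeasureTheory Matrix Finset

noncomputable section

/-- The map induced on the unit sphere by a linear isometry equivalence of `ℝ^N`. -/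
def sphereMap {N : ℕ} (f : EuclideanSpace ℝ (Fin N) ≃ₗᵢ[ℝ] EuclideanSpace ℝ (Fin N)) :
    Metric.sphere (0 : EuclideanSpace ℝ (Fin N)) 1 →
      Metric.sphere (0 : EuclideanSpace ℝ (Fin N)) 1 :=
  fun ψ => ⟨f ψ, by
    rw [mem_sphere_zero_iff_norm, f.norm_map]
    exact mem_sphere_zero_iff_norm.mp ψ.2⟩

/-- `σ` is the uniform (rotation-invariant) probability measure on the unit sphere
`S^{N-1} ⊂ ℝ^N`. -/
def IsUniformSphereMeasure {N : ℕ}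
    (σ : Measure (Metric.sphere (0 : EuclideanSpace ℝ (Fin N)) 1)) : Prop :=
  IsProbabilityMeasure σ ∧
    ∀ f : EuclideanSpace ℝ (Fin N) ≃ₗᵢ[ℝ] EuclideanSpace ℝ (Fin N),
      Measure.map (sphereMap f) σ = σ

theorem continuous_sphereMap {N : ℕ}
    (f : EuclideanSpace ℝ (Fin N) ≃ₗᵢ[ℝ] EuclideanSpace ℝ (Fin N)) : Continuous (sphereMap f) :=
  (f.continuous.comp continuous_subtype_val).subtype_mk _

theorem pow_integral_le_integral_pow {α : Type*} [MeasurableSpace α] {μ : Measure α}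
    [IsProbabilityMeasure μ] {f : α → ℝ} (hf_nonneg : 0 ≤ᵐ[μ] f) (hf : Integrable f μ)
    (t : ℕ) (hft : Integrable (fun x => f x ^ t) μ) :
    (∫ x, f x ∂μ) ^ t ≤ ∫ x, f x ^ t ∂μ :=
  (convexOn_pow t).map_integral_le (continuous_pow t).continuousOn isClosed_Ici hf_nonneg hf hft

theorem prod_div_add_two_mul_le_one (N t : ℕ) :
    ∏ j ∈ range t, (N : ℝ) / (N + 2 * j) ≤ 1 :=
  prod_le_one (fun _ _ => by positivity) fun j _ =>
    div_le_one_of_le₀ (le_add_of_nonneg_right (by positivity)) (by positivity)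

theorem Continuous.integrable_of_compactSpace {X E : Type*} [TopologicalSpace X] [CompactSpace X]
    [MeasurableSpace X] [OpensMeasurableSpace X] [NormedAddCommGroup E] {μ : Measure X}
    [IsFiniteMeasure μ] {g : X → E} (hg : Continuous g) : Integrable g μ :=
  hg.integrable_of_hasCompactSupport (HasCompactSupport.of_compactSpace g)

abbrev UnitSphere (N : ℕ) := Metric.sphere (0 : EuclideanSpace ℝ (Fin N)) 1

namespace UnitSphere

variable {N : ℕ}

theorem continuous_coord (i : Fin N) :
    Continuous fun ψ : UnitSphere N => (ψ : EuclideanSpace ℝ (Fin N)) i :=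
  (EuclideanSpace.proj i).continuous.comp continuous_subtype_val

theorem sum_coord_sq (ψ : UnitSphere N) : ∑ i, (ψ : EuclideanSpace ℝ (Fin N)) i ^ 2 = 1 := by
  rw [← EuclideanSpace.real_norm_sq_eq, mem_sphere_zero_iff_norm.mp ψ.2, one_pow]

end UnitSphere

namespace IsUniformSphereMeasure

open UnitSphere

variable {N : ℕ} {σ : Measure (UnitSphere N)}

theorem integral_comp_sphereMap (hσ : IsUniformSphereMeasure σ)
    (f : EuclideanSpace ℝ (Fin N) ≃ₗᵢ[ℝ] EuclideanSpace ℝ (Fin N))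
    {g : UnitSphere N → ℝ} (hg : AEStronglyMeasurable g σ) :
    ∫ ψ, g (sphereMap f ψ) ∂σ = ∫ ψ, g ψ ∂σ := by
  rw [← integral_map (continuous_sphereMap f).aemeasurable (by rwa [hσ.2 f]), hσ.2 f]

theorem integral_coord_mul_coord_of_ne (hσ : IsUniformSphereMeasure σ) {i j : Fin N}
    (hij : i ≠ j) :
    ∫ ψ : UnitSphere N, (ψ : EuclideanSpace ℝ (Fin N)) i * (ψ : EuclideanSpace ℝ (Fin N)) j ∂σ
      = 0 := by
  let reflect : EuclideanSpace ℝ (Fin N) ≃ₗᵢ[ℝ] EuclideanSpace ℝ (Fin N) :=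
    LinearIsometryEquiv.piLpCongrRight 2
      fun k => if k = i then LinearIsometryEquiv.neg ℝ else LinearIsometryEquiv.refl ℝ ℝ
  have h := hσ.integral_comp_sphereMap reflect
    ((continuous_coord i).mul (continuous_coord j)).aestronglyMeasurable
  simp only [sphereMap, reflect, LinearIsometryEquiv.piLpCongrRight_apply, Pi.mul_apply,
    ↓reduceIte, hij.symm, LinearIsometryEquiv.coe_neg, LinearIsometryEquiv.coe_refl, id_eq,
    neg_mul, integral_neg] at h
  linarith

theorem integral_coord_sq_eq (hσ : IsUniformSphereMeasure σ) (i k : Fin N) :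
    ∫ ψ : UnitSphere N, (ψ : EuclideanSpace ℝ (Fin N)) i ^ 2 ∂σ
      = ∫ ψ : UnitSphere N, (ψ : EuclideanSpace ℝ (Fin N)) k ^ 2 ∂σ := by
  have h := hσ.integral_comp_sphereMap (LinearIsometryEquiv.piLpCongrLeft 2 ℝ ℝ (Equiv.swap i k))
    ((continuous_coord k).pow 2).aestronglyMeasurable
  simpa [sphereMap, LinearIsometryEquiv.piLpCongrLeft_apply, Equiv.piCongrLeft'_apply] using h

theorem integral_coord_sq (hσ : IsUniformSphereMeasure σ) (i : Fin N) :
    ∫ ψ : UnitSphere N, (ψ : EuclideanSpace ℝ (Fin N)) i ^ 2 ∂σ = 1 / N := by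
  have := hσ.1
  have hsum : ∑ k : Fin N, ∫ ψ : UnitSphere N, (ψ : EuclideanSpace ℝ (Fin N)) k ^ 2 ∂σ = 1 := by
    rw [← integral_finsetSum]
    · simp [sum_coord_sq]
    · exact fun k _ => ((continuous_coord k).pow 2).integrable_of_compactSpace
  simp only [hσ.integral_coord_sq_eq _ i, sum_const, card_univ, Fintype.card_fin,
    nsmul_eq_mul] at hsum
  have hN : (N : ℝ) ≠ 0 := by exact_mod_cast i.pos.ne'
  field_simp
  linarith

theorem integral_coord_mul_coord (hσ : IsUniformSphereMeasure σ) (i j : Fin N) :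
    ∫ ψ : UnitSphere N, (ψ : EuclideanSpace ℝ (Fin N)) i * (ψ : EuclideanSpace ℝ (Fin N)) j ∂σ
      = (1 : Matrix (Fin N) (Fin N) ℝ) i j / N := by
  rcases eq_or_ne i j with rfl | hij
  · simp_rw [← sq, hσ.integral_coord_sq, one_apply_eq]
  · rw [hσ.integral_coord_mul_coord_of_ne hij, one_apply_ne hij, zero_div]

theorem integral_dotProduct_mulVec (hσ : IsUniformSphereMeasure σ)
    (A : Matrix (Fin N) (Fin N) ℝ) :
    ∫ ψ : UnitSphere N, (ψ : EuclideanSpace ℝ (Fin N)) ⬝ᵥ A *ᵥ (ψ : EuclideanSpace ℝ (Fin N)) ∂σ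
      = A.trace / N := by
  have := hσ.1
  have hint : ∀ i j, Integrable (fun ψ : UnitSphere N => A i j *
      ((ψ : EuclideanSpace ℝ (Fin N)) i * (ψ : EuclideanSpace ℝ (Fin N)) j)) σ := fun i j =>
    (continuous_const.mul ((continuous_coord i).mul (continuous_coord j))).integrable_of_compactSpace
  have hexpand : ∀ ψ : UnitSphere N,
      (ψ : EuclideanSpace ℝ (Fin N)) ⬝ᵥ A *ᵥ (ψ : EuclideanSpace ℝ (Fin N)) = ∑ i, ∑ j,
        A i j * ((ψ : EuclideanSpace ℝ (Fin N)) i * (ψ : EuclideanSpace ℝ (Fin N)) j) := by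
    intro ψ
    simp only [dotProduct, mulVec, mul_sum]
    exact sum_congr rfl fun i _ => sum_congr rfl fun j _ => by ring
  simp_rw [hexpand]
  rw [integral_finsetSum _ fun i _ => integrable_finsetSum _ fun j _ => hint i j]
  simp_rw [integral_finsetSum _ fun j _ => hint _ j, integral_const_mul,
    hσ.integral_coord_mul_coord]
  simp [one_apply, trace, sum_mul, div_eq_mul_inv]

end IsUniformSphereMeasure

open UnitSphere in
theorem haar_moment_lower_bound_general (N : ℕ)
    (σ : Measure (Metric.sphere (0 : EuclideanSpace ℝ (Fin N)) 1))
    (hσ : IsUniformSphereMeasure σ)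
    (O : Matrix (Fin N) (Fin N) ℝ) (hpsd : O.PosSemidef)
    (t : ℕ) :
    (O.trace / N) ^ t * ∏ j ∈ Finset.range t, (N : ℝ) / ((N : ℝ) + 2 * j) ≤
      ∫ ψ, ((ψ : EuclideanSpace ℝ (Fin N)) ⬝ᵥ
        O.mulVec (ψ : EuclideanSpace ℝ (Fin N))) ^ t ∂σ := by
  have := hσ.1
  have hQ_cont : Continuous fun ψ : UnitSphere N =>
      (ψ : EuclideanSpace ℝ (Fin N)) ⬝ᵥ O *ᵥ (ψ : EuclideanSpace ℝ (Fin N)) :=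
    have hψ := continuous_pi (continuous_coord (N := N))
    hψ.dotProduct (continuous_const.matrix_mulVec hψ)
  have hQ_nonneg : ∀ ψ : UnitSphere N,
      0 ≤ (ψ : EuclideanSpace ℝ (Fin N)) ⬝ᵥ O *ᵥ (ψ : EuclideanSpace ℝ (Fin N)) := fun ψ => by
    simpa using hpsd.dotProduct_mulVec_nonneg (ψ : EuclideanSpace ℝ (Fin N))
  calc (O.trace / N) ^ t * ∏ j ∈ range t, (N : ℝ) / (N + 2 * j)
      ≤ (O.trace / N) ^ t :=
        mul_le_of_le_one_right (by have := hpsd.trace_nonneg; positivity)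
          (prod_div_add_two_mul_le_one N t)
    _ = (∫ ψ, (ψ : EuclideanSpace ℝ (Fin N)) ⬝ᵥ O *ᵥ (ψ : EuclideanSpace ℝ (Fin N)) ∂σ) ^ t := by
        rw [hσ.integral_dotProduct_mulVec O]
    _ ≤ _ := pow_integral_le_integral_pow (ae_of_all _ hQ_nonneg)
        hQ_cont.integrable_of_compactSpace t (hQ_cont.pow t).integrable_of_compactSpace

/-- nonasymptotic lower bound on the `t`-th Haar moment of a positive semidefinite
observable: `μ_t(O) ≥ (Tr(O)/N)^t · ∏_{j=0}^{t-1} N/(N+2j)`. -/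
theorem haar_moment_lower_bound (N : ℕ) (hN : 1 ≤ N)
    (σ : Measure (Metric.sphere (0 : EuclideanSpace ℝ (Fin N)) 1))
    (hσ : IsUniformSphereMeasure σ)
    (O : Matrix (Fin N) (Fin N) ℝ) (hpsd : O.PosSemidef)
    (t : ℕ) (ht : 1 ≤ t) :
    (O.trace / N) ^ t * ∏ j ∈ Finset.range t, (N : ℝ) / ((N : ℝ) + 2 * j) ≤
      ∫ ψ, ((ψ : EuclideanSpace ℝ (Fin N)) ⬝ᵥ
        O.mulVec (ψ : EuclideanSpace ℝ (Fin N))) ^ t ∂σ :=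
  haar_moment_lower_bound_general N σ hσ O hpsd t

end
end

section
/- Let N ≥ 2 and let U_0, U_1, …, U_N be N+1 complex N×N unitary matrices forming a complete set of mutually unbiased bases, i.e. for all a ≠ b and all indices i, j, |((U_a)ᴴ U_b)_{ij}|² = 1/N. Then the real linear span of the rank-one projectors { U_b E_{ii} (U_b)ᴴ : b ∈ {0,…,N}, i ∈ {1,…,N} } (where E_{ii} is the matrix with a single 1 in position (i,i)) equals the full real vector space of N×N Hermitian matrices. Consequently, measurements of all these projectors are tomographically complete: two Hermitian matrices with the same inner product against every projector in the family are equal. -/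
/-!
The `N(N+1)` projectors `Pₓ` onto the vectors of a complete set of MUBs form a projective
2-design: `∑ₓ Pₓ ⊗ Pₓ = 1 + S`, with `S` the swap of the two tensor factors. Indeed, for
`T = ∑ₓ Pₓ ⊗ Pₓ` the Hilbert–Schmidt norm of `T - (1 + S)` expands into `tr S = N`,
`tr (Pₓ ⊗ Pₓ) S = tr Pₓ² = 1` and `∑ₓ,ᵧ tr(Pₓ Pᵧ)²`, and the MUB Gram values
`tr(Pₓ Pᵧ) ∈ {1, 0, 1/N}` make it vanish.
Contracting the design identity against `A` gives `∑ₓ tr(A Pₓ) Pₓ = tr(A) 1 + A`, hence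
`A = ∑ₓ (tr(A Pₓ) - tr A / (N + 1)) Pₓ`, with real coefficients when `A` is Hermitian.
Tomographic completeness follows: `tr((ρ - τ) ·)` vanishes on the span, so on `ρ - τ` itself.
-/

open Matrix Finset Kronecker

namespace Matrix

section Swap

def swapMatrix (n α : Type*) [DecidableEq n] [Zero α] [One α] : Matrix (n × n) (n × n) α :=
  of fun p q => if q = p.swap then 1 else 0

variable {n α : Type*} [DecidableEq n]

lemma swapMatrix_apply [Zero α] [One α] (p q : n × n) :
    swapMatrix n α p q = if q = p.swap then 1 else 0 := rfl

@[simp]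
lemma conjTranspose_swapMatrix [Semiring α] [StarRing α] :
    (swapMatrix n α)ᴴ = swapMatrix n α := by
  ext p q
  have hsymm : p = q.swap ↔ q = p.swap := by constructor <;> rintro rfl <;> rfl
  simp only [conjTranspose_apply, swapMatrix_apply, hsymm]
  split_ifs <;> simp

variable [Fintype n]

@[simp]
lemma swapMatrix_mul_swapMatrix [Semiring α] : swapMatrix n α * swapMatrix n α = 1 := by
  ext p q
  simp only [mul_apply, swapMatrix_apply, ite_mul, one_mul, zero_mul, sum_ite_eq',
    mem_univ, if_true, Prod.swap_swap, one_apply, eq_comm]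

lemma trace_swapMatrix_mul_kronecker [Semiring α] (A B : Matrix n n α) :
    (swapMatrix n α * (A ⊗ₖ B)).trace = (A * B).trace := by
  simp only [trace, diag, mul_apply, swapMatrix_apply, ite_mul, one_mul, zero_mul,
    sum_ite_eq', mem_univ, if_true, kroneckerMap_apply, Fintype.sum_prod_type,
    Prod.fst_swap, Prod.snd_swap]
  exact sum_comm

lemma trace_kronecker_mul_swapMatrix [CommSemiring α] (A B : Matrix n n α) :
    ((A ⊗ₖ B) * swapMatrix n α).trace = (A * B).trace := by
  rw [trace_mul_comm, trace_swapMatrix_mul_kronecker]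

lemma trace_swapMatrix [Semiring α] : (swapMatrix n α).trace = Fintype.card n := by
  simpa using trace_swapMatrix_mul_kronecker (1 : Matrix n n α) 1

end Swap

section Design

variable {𝕜 n ι : Type*} [RCLike 𝕜] [Fintype n] [DecidableEq n] [Fintype ι]

open scoped ComplexOrder in
theorem sum_kronecker_self_eq_one_add_swapMatrix (P : ι → Matrix n n 𝕜)
    (hP : ∀ x, (P x).IsHermitian) (htr : ∀ x, (P x).trace = 1)
    (hpure : ∀ x, (P x * P x).trace = 1)
    (hcard : Fintype.card ι = Fintype.card n * (Fintype.card n + 1))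
    (hpot : ∀ x, ∑ y, (P x * P y).trace ^ 2 = 2) :
    ∑ x, P x ⊗ₖ P x = 1 + swapMatrix n 𝕜 := by
  set d : 𝕜 := (Fintype.card n : 𝕜)
  have hι : (Fintype.card ι : 𝕜) = d * (d + 1) := by simp [hcard, d]
  set T := ∑ x, P x ⊗ₖ P x
  set S := swapMatrix n 𝕜
  have hT : Tᴴ = T := by simp only [T, conjTranspose_sum, conjTranspose_kronecker, (hP _).eq]
  have hTT : (T * T).trace = 2 * d * (d + 1) := by
    simp only [T, sum_mul_sum, trace_sum, ← mul_kronecker_mul, trace_kronecker]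
    simp only [← sq, hpot, sum_const, card_univ, nsmul_eq_mul, hι]
    ring
  have hTS : (T * S).trace = d * (d + 1) := by
    simp only [T, S, sum_mul, trace_sum, trace_kronecker_mul_swapMatrix, hpure, sum_const,
      card_univ, nsmul_eq_mul, mul_one, hι]
  have hST : (S * T).trace = d * (d + 1) := by rw [trace_mul_comm, hTS]
  have hT1 : T.trace = d * (d + 1) := by
    simp only [T, trace_sum, trace_kronecker, htr, mul_one, sum_const, card_univ, nsmul_eq_mul,
      hι]
  have h1 : (1 : Matrix (n × n) (n × n) 𝕜).trace = d * d := by simp [d, Fintype.card_prod]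
  rw [← sub_eq_zero, ← trace_conjTranspose_mul_self_eq_zero_iff]
  simp only [conjTranspose_sub, conjTranspose_add, hT, conjTranspose_one, S,
    conjTranspose_swapMatrix, sub_mul, mul_sub, add_mul, mul_add, mul_one, one_mul,
    swapMatrix_mul_swapMatrix, trace_sub, trace_add]
  rw [hTT, hTS, hST, hT1, trace_swapMatrix, h1]
  ring

end Design

section Reconstruction

variable {α n ι : Type*} [Fintype n] [DecidableEq n] [Fintype ι]

theorem sum_trace_mul_smul_eq_of_sum_kronecker [CommRing α] (P : ι → Matrix n n α)
    (hdesign : ∑ x, P x ⊗ₖ P x = 1 + swapMatrix n α) (A : Matrix n n α) :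
    ∑ x, (A * P x).trace • P x = A.trace • 1 + A := by
  ext k m
  have key : ∀ j l, ∑ x, P x l j * P x k m = (1 + swapMatrix n α) (l, k) (j, m) := by
    intro j l
    simp only [← hdesign, sum_apply, kroneckerMap_apply]
  calc (∑ x, (A * P x).trace • P x) k m = ∑ j, ∑ l, A j l * ∑ x, P x l j * P x k m := by
        simp only [sum_apply, smul_apply, trace, diag, mul_apply, smul_eq_mul, sum_mul, mul_sum,
          mul_assoc]
        rw [sum_comm]
        exact sum_congr rfl fun j _ => sum_comm
    _ = _ := by
        simp [key, one_apply, swapMatrix_apply, mul_add, sum_add_distrib, ite_and, trace]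

theorem eq_sum_smul_of_sum_kronecker [Field α] [CharZero α] (P : ι → Matrix n n α)
    (htr : ∀ x, (P x).trace = 1) (hdesign : ∑ x, P x ⊗ₖ P x = 1 + swapMatrix n α)
    (A : Matrix n n α) :
    A = ∑ x, ((A * P x).trace - A.trace / (Fintype.card n + 1)) • P x := by
  have hsum : ∑ x, P x = ((Fintype.card n : α) + 1) • 1 := by
    simpa [htr, add_smul] using sum_trace_mul_smul_eq_of_sum_kronecker P hdesign 1
  have hd : (Fintype.card n : α) + 1 ≠ 0 := Nat.cast_add_one_ne_zero _
  rw [sum_congr rfl fun x _ => sub_smul _ _ (P x), sum_sub_distrib,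
    sum_trace_mul_smul_eq_of_sum_kronecker P hdesign, ← smul_sum, hsum, smul_smul,
    div_mul_cancel₀ _ hd, add_sub_cancel_left]

end Reconstruction

section Span

variable {𝕜 n ι : Type*} [RCLike 𝕜] [Fintype n]

lemma IsHermitian.trace_mul_isSelfAdjoint {A B : Matrix n n 𝕜} (hA : A.IsHermitian)
    (hB : B.IsHermitian) : IsSelfAdjoint (A * B).trace := by
  rw [IsSelfAdjoint, ← trace_conjTranspose, conjTranspose_mul, hA.eq, hB.eq, trace_mul_comm]

variable [DecidableEq n] [Fintype ι]

theorem span_range_eq_isHermitian_of_sum_kronecker (P : ι → Matrix n n 𝕜)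
    (hP : ∀ x, (P x).IsHermitian) (htr : ∀ x, (P x).trace = 1)
    (hdesign : ∑ x, P x ⊗ₖ P x = 1 + swapMatrix n 𝕜) :
    (Submodule.span ℝ (Set.range P) : Set (Matrix n n 𝕜)) = {M | M.IsHermitian} := by
  refine subset_antisymm ?_ fun A hA => ?_
  · exact Submodule.span_le (p := selfAdjoint.submodule ℝ (Matrix n n 𝕜)).2
      (Set.range_subset_iff.2 hP)
  · rw [SetLike.mem_coe, eq_sum_smul_of_sum_kronecker P htr hdesign A]
    refine Submodule.sum_mem _ fun x _ => ?_
    have htrA : IsSelfAdjoint A.trace := by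
      simpa using hA.trace_mul_isSelfAdjoint isHermitian_one
    have hreal : IsSelfAdjoint ((A * P x).trace - A.trace / (Fintype.card n + 1)) :=
      (hA.trace_mul_isSelfAdjoint (hP x)).sub
        (htrA.div ((IsSelfAdjoint.natCast _).add (IsSelfAdjoint.one _)))
    rw [← RCLike.conj_eq_iff_re.1 hreal, ← RCLike.real_smul_eq_coe_smul]
    exact Submodule.smul_mem _ _ (Submodule.subset_span ⟨x, rfl⟩)

theorem eq_of_forall_trace_mul_eq_of_span_eq {S : Set (Matrix n n 𝕜)}
    (hS : (Submodule.span ℝ S : Set (Matrix n n 𝕜)) = {M | M.IsHermitian})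
    {ρ τ : Matrix n n 𝕜} (hρ : ρ.IsHermitian) (hτ : τ.IsHermitian)
    (h : ∀ M ∈ S, (ρ * M).trace = (τ * M).trace) : ρ = τ := by
  set A := ρ - τ
  have hA : A.IsHermitian := hρ.sub hτ
  let f : Matrix n n 𝕜 →ₗ[ℝ] 𝕜 := (traceLinearMap n ℝ 𝕜).comp (LinearMap.mulLeft ℝ A)
  have hf : Submodule.span ℝ S ≤ LinearMap.ker f := Submodule.span_le.2 fun M hM => by
    simp [f, A, sub_mul, h M hM]
  have hAA : (Aᴴ * A).trace = 0 := by
    rw [hA.eq]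
    exact hf (hS ▸ hA : A ∈ (Submodule.span ℝ S : Set _))
  open scoped ComplexOrder in
  exact sub_eq_zero.1 (trace_conjTranspose_mul_self_eq_zero_iff.1 hAA)

end Span

section ColumnProjector

variable {α 𝕜 n : Type*} [Fintype n] [DecidableEq n]

def columnProj [Semiring α] [StarRing α] (U : Matrix n n α) (i : n) : Matrix n n α :=
  U * single i i 1 * Uᴴ

lemma isHermitian_columnProj [Semiring α] [StarRing α] (U : Matrix n n α) (i : n) :
    (columnProj U i).IsHermitian :=
  isHermitian_mul_mul_conjTranspose U (by simp [IsHermitian, conjTranspose_single])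

lemma trace_columnProj [CommRing α] [StarRing α] {U : Matrix n n α}
    (hU : U ∈ unitaryGroup n α) (i : n) : (columnProj U i).trace = 1 := by
  rw [columnProj, trace_mul_cycle, ← star_eq_conjTranspose, (mem_unitaryGroup_iff').1 hU,
    one_mul, trace_single_eq_same]

lemma trace_columnProj_mul_columnProj [RCLike 𝕜] (U V : Matrix n n 𝕜) (i j : n) :
    (columnProj U i * columnProj V j).trace = ((‖(Uᴴ * V) i j‖ ^ 2 : ℝ) : 𝕜) := by
  calc (columnProj U i * columnProj V j).trace
      = (single i i 1 * (Uᴴ * V) * single j j 1 * (Vᴴ * U)).trace := by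
        simp only [columnProj, Matrix.mul_assoc]
        rw [trace_mul_comm]
        simp only [Matrix.mul_assoc]
    _ = (Vᴴ * U) j i * (Uᴴ * V) i j := by
        rw [single_mul_mul_single, trace_single_mul, one_mul, mul_one, smul_eq_mul, mul_comm]
    _ = ((‖(Uᴴ * V) i j‖ ^ 2 : ℝ) : 𝕜) := by
        rw [RCLike.ofReal_pow, ← RCLike.conj_mul, ← conjTranspose_conjTranspose U,
          ← conjTranspose_mul, conjTranspose_apply, conjTranspose_conjTranspose, RCLike.star_def]

lemma trace_columnProj_mul_columnProj_self [RCLike 𝕜] {U : Matrix n n 𝕜}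
    (hU : U ∈ unitaryGroup n 𝕜) (i j : n) :
    (columnProj U i * columnProj U j).trace = if i = j then 1 else 0 := by
  rw [trace_columnProj_mul_columnProj, ← star_eq_conjTranspose, (mem_unitaryGroup_iff').1 hU,
    one_apply]
  split_ifs <;> simp

end ColumnProjector

section MutuallyUnbiased

variable {𝕜 n ι : Type*} [RCLike 𝕜] [Fintype n] [DecidableEq n] [Fintype ι] [DecidableEq ι]
  {U : ι → Matrix n n 𝕜}

theorem sum_trace_columnProj_mul_sq (hU : ∀ b, U b ∈ unitaryGroup n 𝕜)
    (hMUB : ∀ a b, a ≠ b → ∀ i j, ‖((U a)ᴴ * U b) i j‖ ^ 2 = 1 / (Fintype.card n : ℝ))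
    (hcard : Fintype.card ι = Fintype.card n + 1) (hn : Fintype.card n ≠ 0) (b : ι) (i : n) :
    ∑ y : ι × n, (columnProj (U b) i * columnProj (U y.1) y.2).trace ^ 2 = 2 := by
  have hbasis : ∀ c, ∑ j, (columnProj (U b) i * columnProj (U c) j).trace ^ 2
      = if c = b then 1 else 1 / (Fintype.card n : 𝕜) := by
    intro c
    split_ifs with hc
    · simp [hc, trace_columnProj_mul_columnProj_self (hU b)]
    · simp only [trace_columnProj_mul_columnProj, hMUB b c (Ne.symm hc)]
      rw [sum_const, card_univ, nsmul_eq_mul]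
      push_cast
      field_simp
  rw [Fintype.sum_prod_type, sum_congr rfl fun c _ => hbasis c, Fintype.sum_eq_add_sum_compl b,
    if_pos rfl, sum_congr rfl fun c hc => if_neg (by simpa using hc), sum_const, card_compl,
    card_singleton, hcard, Nat.add_sub_cancel, nsmul_eq_mul,
    mul_one_div_cancel (Nat.cast_ne_zero.2 hn), one_add_one_eq_two]

theorem sum_kronecker_columnProj_eq_one_add_swapMatrix (hU : ∀ b, U b ∈ unitaryGroup n 𝕜)
    (hMUB : ∀ a b, a ≠ b → ∀ i j, ‖((U a)ᴴ * U b) i j‖ ^ 2 = 1 / (Fintype.card n : ℝ))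
    (hcard : Fintype.card ι = Fintype.card n + 1) (hn : Fintype.card n ≠ 0) :
    ∑ x : ι × n, columnProj (U x.1) x.2 ⊗ₖ columnProj (U x.1) x.2 = 1 + swapMatrix n 𝕜 :=
  sum_kronecker_self_eq_one_add_swapMatrix _ (fun _ => isHermitian_columnProj _ _)
    (fun _ => trace_columnProj (hU _) _)
    (fun _ => by simp [trace_columnProj_mul_columnProj_self (hU _)])
    (by rw [Fintype.card_prod, hcard, mul_comm])
    (fun _ => sum_trace_columnProj_mul_sq hU hMUB hcard hn _ _)

end MutuallyUnbiased

end Matrix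

/-- the rank-one basis projectors of a complete set of `N+1` mutually unbiased
bases span (over ℝ) the full real vector space of `N×N` Hermitian matrices; consequently the
family of these projectors is tomographically complete. -/
theorem mub_projectors_tomographically_complete (N : ℕ) (hN : 2 ≤ N)
    (U : Fin (N + 1) → Matrix (Fin N) (Fin N) ℂ)
    (hU : ∀ b, U b ∈ Matrix.unitaryGroup (Fin N) ℂ)
    (hMUB : ∀ a b, a ≠ b → ∀ i j : Fin N,
      ‖((U a)ᴴ * U b) i j‖ ^ 2 = 1 / N) :
    (Submodule.span ℝ {M : Matrix (Fin N) (Fin N) ℂ |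
          ∃ b : Fin (N + 1), ∃ i : Fin N,
            M = U b * Matrix.single i i (1 : ℂ) * (U b)ᴴ} :
        Set (Matrix (Fin N) (Fin N) ℂ)) = {M | M.IsHermitian} ∧
      ∀ ρ τ : Matrix (Fin N) (Fin N) ℂ, ρ.IsHermitian → τ.IsHermitian →
        (∀ b : Fin (N + 1), ∀ i : Fin N,
          (ρ * (U b * Matrix.single i i (1 : ℂ) * (U b)ᴴ)).trace =
            (τ * (U b * Matrix.single i i (1 : ℂ) * (U b)ᴴ)).trace) →
        ρ = τ := by
  set P : Fin (N + 1) × Fin N → Matrix (Fin N) (Fin N) ℂ := fun x => columnProj (U x.1) x.2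
  have hdesign : ∑ x, P x ⊗ₖ P x = 1 + swapMatrix (Fin N) ℂ :=
    sum_kronecker_columnProj_eq_one_add_swapMatrix hU (by simpa using hMUB) (by simp)
      (by rw [Fintype.card_fin]; omega)
  have hrange : {M | ∃ b i, M = U b * single i i 1 * (U b)ᴴ} = Set.range P := by
    ext M
    simp [P, columnProj, eq_comm]
  have hspan : (Submodule.span ℝ (Set.range P) : Set (Matrix (Fin N) (Fin N) ℂ))
      = {M | M.IsHermitian} :=
    span_range_eq_isHermitian_of_sum_kronecker P (fun _ => isHermitian_columnProj _ _)
      (fun _ => trace_columnProj (hU _) _) hdesign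
  rw [hrange]
  refine ⟨hspan, fun ρ τ hρ hτ h => eq_of_forall_trace_mul_eq_of_span_eq hspan hρ hτ ?_⟩
  rintro _ ⟨⟨b, i⟩, rfl⟩
  exact h b i
end
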